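/- arXiv:2001.08719 — 2 statements merged into one kernel-verified Lean document; each statement's English description precedes it below -/
import Mathlib

section
/- Let $\{\eta_k\}$ be i.i.d. Bernoulli($p$) random variables, $p \in (0,1]$, and $M_k = 2 + \sum_{l=1}^{k-1} \eta_l$. Then almost surely the series $\sum_{k=1}^{\infty} \left(\frac{1}{M_k + 1} - \frac{1}{pk}\right)$ converges absolutely. -/
open MeasureTheory ProbabilityTheory Filter Topology Finset

/-!
Write `T k = ∑_{l=1}^k η l`. By the strong law of large numbers `T k ≥ p k / 2` for large `k`,
and then the `k`-th term is at most `2 (|T k - p k| + p + 3) / (p k)²`. Instead of the law of the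
iterated logarithm, a second-moment bound suffices: `𝔼 |T k - p k| ≤ √(Var (T k)) ≤ √k / 2`, so
`∑ 𝔼 |T k - p k| / k² < ∞` and therefore `∑ |T k - p k| / k²` converges almost surely.
-/

lemma abs_one_div_sub_one_div_le {p t k : ℝ} (hp : 0 < p) (hk : 0 < k) (ht : p * k / 2 ≤ t) :
    |1 / ((2 + t) + 1) - 1 / (p * (k + 1))| ≤
      2 / p ^ 2 * (|t - p * k| / k ^ 2 + (p + 3) / k ^ 2) := by
  have ht0 : 0 < t := lt_of_lt_of_le (by positivity) ht
  have hden : p ^ 2 * k ^ 2 / 2 ≤ ((2 + t) + 1) * (p * (k + 1)) :=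
    calc p ^ 2 * k ^ 2 / 2 = (p * k / 2) * (p * k) := by ring
      _ ≤ ((2 + t) + 1) * (p * (k + 1)) := by gcongr <;> linarith
  have hnum : |p * (k + 1) - ((2 + t) + 1)| ≤ |t - p * k| + p + 3 := by
    rw [abs_le]; constructor <;> linarith [le_abs_self (t - p * k), neg_abs_le (t - p * k)]
  rw [div_sub_div _ _ (by positivity) (by positivity), one_mul, mul_one, abs_div,
    abs_of_pos (a := (2 + t + 1) * (p * (k + 1))) (by positivity)]
  calc |p * (k + 1) - (2 + t + 1)| / ((2 + t + 1) * (p * (k + 1)))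
      ≤ (|t - p * k| + p + 3) / (p ^ 2 * k ^ 2 / 2) :=
        div_le_div₀ (by positivity) hnum (by positivity) hden
    _ = _ := by field_simp; ring

lemma eventually_half_mul_le_of_tendsto_div {x : ℕ → ℝ} {p : ℝ} (hp : 0 < p)
    (hx : Tendsto (fun k => x k / k) atTop (𝓝 p)) :
    ∀ᶠ k : ℕ in atTop, 0 < (k : ℝ) ∧ p * k / 2 ≤ x k := by
  filter_upwards [hx.eventually (lt_mem_nhds (half_lt_self hp)), eventually_gt_atTop 0]
    with k hk hk0
  have hk0' : (0 : ℝ) < k := by exact_mod_cast hk0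
  exact ⟨hk0', by linarith [(lt_div_iff₀ hk0').1 hk]⟩

lemma summable_sqrt_div_sq : Summable fun k : ℕ => √(k : ℝ) / (k : ℝ) ^ 2 := by
  refine (Real.summable_nat_rpow_inv.2 (by norm_num : (1 : ℝ) < 3 / 2)).congr fun k => ?_
  rcases k.eq_zero_or_pos with rfl | hk
  · simp
  rw [Real.sqrt_eq_rpow, ← Real.rpow_natCast, ← Real.rpow_sub (by positivity),
    ← Real.rpow_neg (by positivity)]
  norm_num

lemma eq_indicator_one_of_eq_zero_or_eq_one {α : Type*} {X : α → ℝ}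
    (hX : ∀ a, X a = 0 ∨ X a = 1) : X = {a | X a = 1}.indicator fun _ => 1 := by
  ext a
  rcases hX a with h | h <;> simp [h]

section

variable {Ω : Type*} [MeasurableSpace Ω] {μ : Measure Ω}

lemma ae_summable_norm_of_summable_integral_norm {E : Type*} [NormedAddCommGroup E]
    {f : ℕ → Ω → E} (hf : ∀ n, Integrable (f n) μ)
    (hsum : Summable fun n => ∫ ω, ‖f n ω‖ ∂μ) :
    ∀ᵐ ω ∂μ, Summable fun n => ‖f n ω‖ := by
  refine summable_norm_of_tsum_eLpNorm_ne_top le_rfl (fun n => (hf n).aestronglyMeasurable) ?_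
  simp_rw [eLpNorm_one_eq_lintegral_enorm, ← ofReal_integral_norm_eq_lintegral_enorm (hf _)]
  rw [← ENNReal.ofReal_tsum_of_nonneg (fun n => integral_nonneg fun _ => norm_nonneg _) hsum]
  exact ENNReal.ofReal_ne_top

lemma ae_tendsto_sum_Icc_div {η : ℕ → Ω → ℝ} (hint : Integrable (η 0) μ)
    (hindep : iIndepFun η μ) (hident : ∀ i, IdentDistrib (η i) (η 0) μ μ) :
    ∀ᵐ ω ∂μ, Tendsto (fun k : ℕ => (∑ l ∈ Icc 1 k, η l ω) / k) atTop (𝓝 μ[η 0]) := by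
  have hlaw := strong_law_ae_real (fun i => η (i + 1)) ((hident 1).integrable_iff.2 hint)
    (fun i j hij => hindep.indepFun (fun h => hij (Nat.succ_injective h)))
    (fun i => (hident (i + 1)).trans (hident 1).symm)
  rw [(hident 1).integral_eq] at hlaw
  filter_upwards [hlaw] with ω hω
  convert hω using 3 with k
  rw [← Ico_add_one_right_eq_Icc, sum_Ico_eq_sum_range]
  simp [add_comm]

variable [IsProbabilityMeasure μ]

lemma identDistrib_indicator_const {Ω' M : Type*} [MeasurableSpace Ω'] [Zero M]
    [MeasurableSpace M] {ν : Measure Ω'} [IsProbabilityMeasure ν]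
    {A : Set Ω} {B : Set Ω'} (hA : MeasurableSet A) (hB : MeasurableSet B) (hAB : μ A = ν B)
    (c : M) : IdentDistrib (A.indicator fun _ => c) (B.indicator fun _ => c) μ ν where
  aemeasurable_fst := (measurable_const.indicator hA).aemeasurable
  aemeasurable_snd := (measurable_const.indicator hB).aemeasurable
  map_eq := by
    classical
    ext s hs
    rw [Measure.map_apply (measurable_const.indicator hA) hs,
      Measure.map_apply (measurable_const.indicator hB) hs,
      Set.indicator_const_preimage_eq_union, Set.indicator_const_preimage_eq_union]
    split_ifs <;> simp [prob_compl_eq_one_sub, hA, hB, hAB]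

lemma integral_abs_sub_integral_le_sqrt_variance {X : Ω → ℝ} (hX : MemLp X 2 μ) :
    ∫ ω, |X ω - μ[X]| ∂μ ≤ √(variance X μ) := by
  have hY : MemLp (fun ω => |X ω - μ[X]|) 2 μ := (hX.sub (memLp_const _)).abs
  have hvar := variance_nonneg (fun ω => |X ω - μ[X]|) μ
  rw [variance_eq_sub hY] at hvar
  have hsq : μ[(fun ω => |X ω - μ[X]|) ^ 2] = variance X μ := by
    rw [variance_eq_integral hX.aemeasurable]
    congr with ω
    simp
  exact (le_abs_self _).trans (Real.abs_le_sqrt (by linarith))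

section UnitIntervalValued

variable {ι : Type*} {η : ι → Ω → ℝ} (hmeas : ∀ i, AEMeasurable (η i) μ)
  (hbdd : ∀ i, ∀ᵐ ω ∂μ, η i ω ∈ Set.Icc 0 1) (hindep : iIndepFun η μ)
include hmeas hbdd hindep

lemma variance_sum_le_card_div_four (s : Finset ι) :
    variance (∑ i ∈ s, η i) μ ≤ #s / 4 := by
  rw [IndepFun.variance_sum
    (fun i _ => memLp_of_bounded (hbdd i) (hmeas i).aestronglyMeasurable 2)
    (fun i _ j _ hij => hindep.indepFun hij)]
  calc ∑ i ∈ s, variance (η i) μ ≤ ∑ _i ∈ s, ((1 - 0) / 2 : ℝ) ^ 2 :=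
        sum_le_sum fun i _ => variance_le_sq_of_bounded (hbdd i) (hmeas i)
    _ = #s / 4 := by rw [sum_const, nsmul_eq_mul]; ring

lemma integral_abs_sum_sub_le_sqrt_card_div_two {p : ℝ} (hmean : ∀ i, μ[η i] = p)
    (s : Finset ι) : ∫ ω, |∑ i ∈ s, η i ω - p * #s| ∂μ ≤ √(#s : ℝ) / 2 := by
  have hL2 : MemLp (∑ i ∈ s, η i) 2 μ :=
    memLp_finsetSum' s fun i _ => memLp_of_bounded (hbdd i) (hmeas i).aestronglyMeasurable 2
  have hsum_mean : ∫ ω, ∑ i ∈ s, η i ω ∂μ = p * #s := by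
    rw [integral_finsetSum s fun i _ =>
      (memLp_of_bounded (hbdd i) (hmeas i).aestronglyMeasurable 1).integrable le_rfl]
    simp [hmean, mul_comm]
  calc ∫ ω, |∑ i ∈ s, η i ω - p * #s| ∂μ
      = ∫ ω, |(∑ i ∈ s, η i) ω - μ[∑ i ∈ s, η i]| ∂μ := by
        simp only [Finset.sum_apply, hsum_mean]
    _ ≤ √(variance (∑ i ∈ s, η i) μ) := integral_abs_sub_integral_le_sqrt_variance hL2
    _ ≤ √((#s : ℝ) / 4) := Real.sqrt_le_sqrt (variance_sum_le_card_div_four hmeas hbdd hindep s)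
    _ = √(#s : ℝ) / 2 := by
        rw [Real.sqrt_div' _ (by norm_num), show (4 : ℝ) = 2 ^ 2 by norm_num,
          Real.sqrt_sq (by norm_num)]

end UnitIntervalValued

lemma ae_summable_abs_sum_Icc_sub_div_sq {η : ℕ → Ω → ℝ} {p : ℝ}
    (hmeas : ∀ i, AEMeasurable (η i) μ) (hbdd : ∀ i, ∀ᵐ ω ∂μ, η i ω ∈ Set.Icc 0 1)
    (hindep : iIndepFun η μ) (hmean : ∀ i, μ[η i] = p) :
    ∀ᵐ ω ∂μ, Summable fun k : ℕ => |∑ l ∈ Icc 1 k, η l ω - p * k| / (k : ℝ) ^ 2 := by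
  set f : ℕ → Ω → ℝ := fun k ω => (∑ l ∈ Icc 1 k, η l ω - p * k) / (k : ℝ) ^ 2
  have hint i : Integrable (η i) μ :=
    (memLp_of_bounded (hbdd i) (hmeas i).aestronglyMeasurable 1).integrable le_rfl
  have hf k : Integrable (f k) μ :=
    ((integrable_finsetSum _ fun i _ => hint i).sub (integrable_const _)).div_const _
  have hsum : Summable fun k => ∫ ω, ‖f k ω‖ ∂μ := by
    refine (summable_sqrt_div_sq.div_const 2).of_nonneg_of_le
      (fun k => integral_nonneg fun _ => norm_nonneg _) fun k => ?_
    calc ∫ ω, ‖f k ω‖ ∂μ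
        = (∫ ω, |∑ l ∈ Icc 1 k, η l ω - p * #(Icc 1 k)| ∂μ) / (k : ℝ) ^ 2 := by
          simp [f, integral_div]
      _ ≤ (√(#(Icc 1 k) : ℝ) / 2) / (k : ℝ) ^ 2 := by
          gcongr
          exact integral_abs_sum_sub_le_sqrt_card_div_two hmeas hbdd hindep hmean _
      _ = √(k : ℝ) / (k : ℝ) ^ 2 / 2 := by rw [Nat.card_Icc, Nat.add_sub_cancel]; ring
  filter_upwards [ae_summable_norm_of_summable_integral_norm hf hsum] with ω hω
  simpa [f, abs_div] using hω
end

theorem stmt_4_general {Ω : Type*} [MeasureSpace Ω] [IsProbabilityMeasure (ℙ : Measure Ω)]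
    (p : ℝ) (hp : 0 < p)
    (η : ℕ → Ω → ℝ)
    (hmeas : ∀ k, Measurable (η k))
    (hindep : iIndepFun η ℙ)
    (hrange : ∀ k ω, η k ω = 0 ∨ η k ω = 1)
    (hber : ∀ k, ℙ {ω | η k ω = 1} = ENNReal.ofReal p) :
    ∀ᵐ ω ∂ℙ, Summable (fun k : ℕ =>
      |1 / ((2 + ∑ l ∈ Finset.Icc 1 k, η l ω) + 1) - 1 / (p * (k + 1))|) := by
  have hind k := eq_indicator_one_of_eq_zero_or_eq_one (hrange k)
  have hset k : MeasurableSet {ω | η k ω = 1} := hmeas k (measurableSet_singleton 1)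
  have hmean k : ℙ[η k] = p := by
    rw [hind k, integral_indicator_const _ (hset k), measureReal_def, hber,
      ENNReal.toReal_ofReal hp.le, smul_eq_mul, mul_one]
  have hident k : IdentDistrib (η k) (η 0) ℙ ℙ := by
    rw [hind k, hind 0]
    exact identDistrib_indicator_const (hset k) (hset 0) (by rw [hber, hber]) 1
  have hbdd k : ∀ᵐ ω ∂ℙ, η k ω ∈ Set.Icc 0 1 :=
    ae_of_all _ fun ω => by rcases hrange k ω with h | h <;> simp [h]
  have hmeas' k : AEMeasurable (η k) ℙ := (hmeas k).aemeasurable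
  have hint : Integrable (η 0) ℙ :=
    (memLp_of_bounded (hbdd 0) (hmeas' 0).aestronglyMeasurable 1).integrable le_rfl
  filter_upwards [ae_tendsto_sum_Icc_div hint hindep hident,
    ae_summable_abs_sum_Icc_sub_div_sq hmeas' hbdd hindep hmean] with ω hlln hdev
  rw [hmean 0] at hlln
  have hsq : Summable fun k : ℕ => (p + 3) / (k : ℝ) ^ 2 := by
    simpa [div_eq_mul_inv] using (Real.summable_nat_pow_inv.2 one_lt_two).mul_left (p + 3)
  refine .of_norm_bounded_eventually_nat ((hdev.add hsq).mul_left (2 / p ^ 2)) ?_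
  filter_upwards [eventually_half_mul_le_of_tendsto_div hp hlln] with k ⟨hk0, hk⟩
  rw [Real.norm_eq_abs, abs_abs]
  exact abs_one_div_sub_one_div_le hp hk0 hk

theorem stmt_4 {Ω : Type*} [MeasureSpace Ω] [IsProbabilityMeasure (ℙ : Measure Ω)]
    (p : ℝ) (hp : 0 < p) (hp1 : p ≤ 1)
    (η : ℕ → Ω → ℝ)
    (hmeas : ∀ k, Measurable (η k))
    (hindep : iIndepFun η ℙ)
    (hrange : ∀ k ω, η k ω = 0 ∨ η k ω = 1)
    (hber : ∀ k, ℙ {ω | η k ω = 1} = ENNReal.ofReal p) :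
    ∀ᵐ ω ∂ℙ, Summable (fun k : ℕ =>
      |1 / ((2 + ∑ l ∈ Finset.Icc 1 k, η l ω) + 1) - 1 / (p * (k + 1))|) :=
  stmt_4_general p hp η hmeas hindep hrange hber
end

section
/- Let $\{\bar\xi_i\}$ be i.i.d. centered random variables with finite variance, $\bar{S}_k = \sum_{l=1}^k \bar\xi_l$, and fix $\zeta > 1$ and $\epsilon > 0$. Then almost surely $\sum_{j=1}^{i} \bar\xi_j \frac{j^{\zeta-1}}{i^{\zeta}} = o(i^{-(1/2-\epsilon)})$ as $i \to \infty$; i.e., $i^{1/2-\epsilon}\left|\frac{1}{i^\zeta}\sum_{j=1}^i j^{\zeta-1}\bar\xi_j\right| \to 0$ a.s. -/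
/-!
Put `α = 1/2 + ε/2`. The variances of `j^{-α} ξ_j` are summable, so the partial sums of
`∑ j^{-α} ξ_j` form an `L²`-bounded martingale and converge almost surely. Kronecker's lemma
with the weights `j^β`, `β = ζ - 1 + α`, turns this into `i^{-β} ∑_{j ≤ i} j^{ζ-1} ξ_j → 0`,
and `i^{1/2-ε} i^{-ζ} = i^{-ε/2} i^{-β}`.
-/

open MeasureTheory ProbabilityTheory Filter Topology Finset Asymptotics
open scoped ENNReal

theorem sum_Icc_mul_eq_mul_sum_sub {R : Type*} [CommRing R] (b x : ℕ → R) (n : ℕ) :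
    ∑ j ∈ Icc 1 n, b j * x j =
      b n * ∑ j ∈ Icc 1 n, x j - ∑ j ∈ range n, (b (j + 1) - b j) * ∑ k ∈ Icc 1 j, x k := by
  induction n with
  | zero => simp
  | succ n ih =>
    rw [sum_Icc_succ_top n.succ_pos', sum_Icc_succ_top n.succ_pos', sum_range_succ, ih]
    ring

theorem sum_Icc_one_eq_sum_range_succ {M : Type*} [AddCommMonoid M] (f : ℕ → M) (hf : f 0 = 0)
    (n : ℕ) : ∑ j ∈ Icc 1 n, f j = ∑ j ∈ range (n + 1), f j := by
  rw [range_eq_Ico, sum_eq_sum_Ico_succ_bot n.succ_pos, hf, zero_add]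
  rfl

theorem Filter.Tendsto.sum_range_mul_div_sum_range {w T : ℕ → ℝ} {L : ℝ}
    (hT : Tendsto T atTop (𝓝 L)) (hw : 0 ≤ w)
    (hw_top : Tendsto (fun n => ∑ j ∈ range n, w j) atTop atTop) :
    Tendsto (fun n => (∑ j ∈ range n, w j * T j) / ∑ j ∈ range n, w j) atTop (𝓝 L) := by
  have hsmall : (fun j => w j * (T j - L)) =o[atTop] w :=
    (((isLittleO_one_iff ℝ).2 (tendsto_sub_nhds_zero_iff.2 hT)).mul_isBigO
      (isBigO_refl w atTop)).congr (fun j => mul_comm _ _) (fun j => one_mul _)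
  have hlim := ((hsmall.sum_range hw hw_top).tendsto_div_nhds_zero).add_const L
  rw [zero_add] at hlim
  refine hlim.congr' ?_
  filter_upwards [hw_top.eventually_gt_atTop 0] with n hn
  simp only [mul_sub, sum_sub_distrib, ← sum_mul]
  field_simp
  ring

theorem tendsto_sum_Icc_mul_div_of_tendsto_sum_Icc {b x : ℕ → ℝ} {L : ℝ} (hb : Monotone b)
    (hb_top : Tendsto b atTop atTop)
    (hx : Tendsto (fun n => ∑ j ∈ Icc 1 n, x j) atTop (𝓝 L)) :
    Tendsto (fun n => (∑ j ∈ Icc 1 n, b j * x j) / b n) atTop (𝓝 0) := by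
  have hW : ∀ n, ∑ j ∈ range n, (b (j + 1) - b j) = b n - b 0 := sum_range_sub b
  have hW_top : Tendsto (fun n => ∑ j ∈ range n, (b (j + 1) - b j)) atTop atTop := by
    simp_rw [hW, sub_eq_add_neg]
    exact tendsto_atTop_add_const_right _ _ hb_top
  have hmean := hx.sum_range_mul_div_sum_range (fun j => sub_nonneg.2 (hb j.le_succ)) hW_top
  have hratio : Tendsto (fun n => (b n - b 0) / b n) atTop (𝓝 1) := by
    have := (tendsto_const_nhds (x := b 0)).div_atTop hb_top
    rw [← sub_zero (1 : ℝ)]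
    refine (tendsto_const_nhds.sub this).congr' ?_
    filter_upwards [hb_top.eventually_ne_atTop 0] with n hn
    field_simp
  have hlim := hx.sub (hmean.mul hratio)
  rw [mul_one, sub_self] at hlim
  refine hlim.congr' ?_
  filter_upwards [hb_top.eventually_ne_atTop 0, hW_top.eventually_ne_atTop 0] with n hbn hWn
  rw [hW] at hWn
  rw [sum_Icc_mul_eq_mul_sum_sub, hW]
  field_simp

section Kolmogorov

variable {Ω : Type*} {mΩ : MeasurableSpace Ω} {μ : Measure Ω} [IsProbabilityMeasure μ]

theorem ENNReal.le_one_add_sq (a : ℝ≥0∞) : a ≤ 1 + a ^ 2 := by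
  rcases le_total a 1 with ha | ha
  · exact ha.trans le_self_add
  · exact (le_self_pow₀ ha two_ne_zero).trans le_add_self

theorem eLpNorm_one_le_one_add_evariance {X : Ω → ℝ} (hX : μ[X] = 0) :
    eLpNorm X 1 μ ≤ 1 + evariance X μ := by
  rw [eLpNorm_one_eq_lintegral_enorm, evariance, hX]
  calc ∫⁻ ω, ‖X ω‖ₑ ∂μ ≤ ∫⁻ ω, 1 + ‖X ω‖ₑ ^ 2 ∂μ := lintegral_mono fun ω => ENNReal.le_one_add_sq _
    _ = 1 + ∫⁻ ω, ‖X ω - 0‖ₑ ^ 2 ∂μ := by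
      rw [lintegral_add_left measurable_const, lintegral_const, measure_univ, one_mul]
      simp_rw [sub_zero]

variable {X : ℕ → Ω → ℝ}

/-- Summing through index `n` makes the process adapted to the natural filtration while the next
increment `X (n + 1)` stays independent of it. -/
theorem martingale_sum_range_succ_of_iIndepFun (hmeas : ∀ i, Measurable (X i))
    (hindep : iIndepFun X μ) (hint : ∀ i, Integrable (X i) μ) (hmean : ∀ i, μ[X i] = 0) :
    Martingale (fun n => ∑ j ∈ range (n + 1), X j)
      (Filtration.natural X fun i => (hmeas i).stronglyMeasurable) μ := by
  set ℱ := Filtration.natural X fun i => (hmeas i).stronglyMeasurable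
  have hadp : StronglyAdapted ℱ fun n => ∑ j ∈ range (n + 1), X j := fun n =>
    Finset.stronglyMeasurable_sum _ fun j hj =>
      (Filtration.stronglyAdapted_natural _ j).mono
        (ℱ.mono (Nat.lt_succ_iff.1 (mem_range.1 hj)))
  refine martingale_of_condExp_sub_eq_zero_nat hadp
    (fun n => integrable_finsetSum' _ fun j _ => hint j) fun n => ?_
  have hnext : Indep (MeasurableSpace.comap (X (n + 1)) inferInstance) (ℱ n) μ := by
    have := indep_iSup_of_disjoint (fun k => (hmeas k).comap_le) hindep
      (Set.disjoint_singleton_left.2 (Set.notMem_Iic.2 n.lt_succ_self))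
    rwa [_root_.iSup_singleton] at this
  rw [sum_range_succ _ (n + 1), add_sub_cancel_left]
  refine (condExp_indep_eq (hmeas (n + 1)).comap_le (ℱ.le n)
    (comap_measurable (X (n + 1))).stronglyMeasurable hnext).trans ?_
  rw [hmean]
  rfl

theorem ae_exists_tendsto_sum_range_of_summable_variance (hmeas : ∀ i, Measurable (X i))
    (hindep : iIndepFun X μ) (hL2 : ∀ i, MemLp (X i) 2 μ) (hmean : ∀ i, μ[X i] = 0)
    (hvar : Summable fun i => variance (X i) μ) :
    ∀ᵐ ω ∂μ, ∃ c, Tendsto (fun n => ∑ j ∈ range n, X j ω) atTop (𝓝 c) := by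
  have hmart := martingale_sum_range_succ_of_iIndepFun hmeas hindep
    (fun i => (hL2 i).integrable one_le_two) hmean
  have hbdd : ∀ n, eLpNorm (∑ j ∈ range (n + 1), X j) 1 μ ≤
      (Real.toNNReal (1 + ∑' i, variance (X i) μ) : ℝ≥0∞) := by
    intro n
    have hsum_var : variance (∑ j ∈ range (n + 1), X j) μ ≤ ∑' i, variance (X i) μ := by
      rw [IndepFun.variance_sum (fun j _ => hL2 j)
        (fun i _ j _ hij => hindep.indepFun hij)]
      exact hvar.sum_le_tsum _ fun i _ => variance_nonneg _ _
    calc eLpNorm (∑ j ∈ range (n + 1), X j) 1 μ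
        ≤ 1 + evariance (∑ j ∈ range (n + 1), X j) μ := by
          refine eLpNorm_one_le_one_add_evariance ?_
          simp only [Finset.sum_apply]
          rw [integral_finsetSum _ fun j _ => (hL2 j).integrable one_le_two]
          exact sum_eq_zero fun j _ => hmean j
      _ ≤ ENNReal.ofReal (1 + ∑' i, variance (X i) μ) := by
          rw [← (memLp_finsetSum' _ fun j _ => hL2 j).ofReal_variance_eq,
            ENNReal.ofReal_add zero_le_one (tsum_nonneg fun i => variance_nonneg _ _),
            ENNReal.ofReal_one]
          gcongr
  filter_upwards [hmart.submartingale.exists_ae_tendsto_of_bdd hbdd] with ω ⟨c, hc⟩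
  refine ⟨c, (tendsto_add_atTop_iff_nat 1).1 ?_⟩
  simpa only [Finset.sum_apply] using hc

end Kolmogorov

theorem ae_exists_tendsto_sum_Icc_rpow_neg_mul {Ω : Type*} {mΩ : MeasurableSpace Ω}
    {μ : Measure Ω} [IsProbabilityMeasure μ] {ξ : ℕ → Ω → ℝ} (hmeas : ∀ i, Measurable (ξ i))
    (hindep : iIndepFun ξ μ) (hident : ∀ i, IdentDistrib (ξ i) (ξ 1) μ μ)
    (hmean : ∀ i, μ[ξ i] = 0) (hL2 : MemLp (ξ 1) 2 μ) {α : ℝ} (hα : 1 / 2 < α) :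
    ∀ᵐ ω ∂μ, ∃ c, Tendsto (fun n : ℕ => ∑ j ∈ Icc 1 n, (j : ℝ) ^ (-α) * ξ j ω) atTop (𝓝 c) := by
  set X : ℕ → Ω → ℝ := fun j ω => (j : ℝ) ^ (-α) * ξ j ω
  have hvar : Summable fun j => variance (X j) μ := by
    have hXvar : ∀ j : ℕ, variance (X j) μ = (j : ℝ) ^ (-(2 * α)) * variance (ξ 1) μ := by
      intro j
      rw [variance_const_mul, (hident j).variance_eq, ← Real.rpow_natCast,
        ← Real.rpow_mul j.cast_nonneg]
      ring_nf
    simp_rw [hXvar]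
    exact (Real.summable_nat_rpow.2 (by linarith)).mul_right _
  have hX0 : ∀ ω, X 0 ω = 0 := fun ω => by
    simp [X, Real.zero_rpow (neg_ne_zero.2 (by linarith : α ≠ 0))]
  filter_upwards [ae_exists_tendsto_sum_range_of_summable_variance
    (fun j => (hmeas j).const_mul _)
    (hindep.comp (fun j => ((j : ℝ) ^ (-α) * ·)) fun j => measurable_const_mul _)
    (fun j => ((hident j).symm.memLp_snd hL2).const_mul _)
    (fun j => by simp only [integral_const_mul, hmean, mul_zero]) hvar] with ω ⟨c, hc⟩
  exact ⟨c, ((tendsto_add_atTop_iff_nat 1).2 hc).congr fun n =>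
    (sum_Icc_one_eq_sum_range_succ (fun j => X j ω) (hX0 ω) n).symm⟩

theorem stmt_11 {Ω : Type*} [MeasureSpace Ω] [IsProbabilityMeasure (ℙ : Measure Ω)]
    (ξ : ℕ → Ω → ℝ)
    (hmeas : ∀ i, Measurable (ξ i))
    (hindep : iIndepFun ξ ℙ)
    (hident : ∀ i, IdentDistrib (ξ i) (ξ 1) ℙ ℙ)
    (hmean : ∀ i, ∫ ω, ξ i ω ∂ℙ = 0)
    (hL2 : Integrable (fun ω => (ξ 1 ω) ^ 2) ℙ)
    (ζ : ℝ) (hζ : 1 < ζ) (ε : ℝ) (hε : 0 < ε) :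
    ∀ᵐ ω ∂ℙ, Tendsto
      (fun i : ℕ => (i : ℝ) ^ ((1 : ℝ) / 2 - ε) *
        |(1 / (i : ℝ) ^ ζ) * ∑ j ∈ Finset.Icc 1 i, (j : ℝ) ^ (ζ - 1) * ξ j ω|)
      atTop (𝓝 0) := by
  have hβ : 0 < ζ - 1 / 2 + ε / 2 := by linarith
  filter_upwards [ae_exists_tendsto_sum_Icc_rpow_neg_mul hmeas hindep hident hmean
    ((memLp_two_iff_integrable_sq (hmeas 1).aestronglyMeasurable).2 hL2)
    (α := 1 / 2 + ε / 2) (by linarith)] with ω ⟨c, hc⟩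
  have hkronecker := tendsto_sum_Icc_mul_div_of_tendsto_sum_Icc
    (fun m n hmn => Real.rpow_le_rpow m.cast_nonneg (Nat.cast_le.2 hmn) hβ.le)
    ((tendsto_rpow_atTop hβ).comp tendsto_natCast_atTop_atTop) hc
  have hdecay : Tendsto (fun i : ℕ => (i : ℝ) ^ (-(ε / 2))) atTop (𝓝 0) :=
    (tendsto_rpow_neg_atTop (half_pos hε)).comp tendsto_natCast_atTop_atTop
  have hlim := hdecay.mul hkronecker.abs
  rw [abs_zero, mul_zero] at hlim
  refine hlim.congr' ?_
  filter_upwards [eventually_gt_atTop 0] with i hi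
  have hi' : (0 : ℝ) < i := Nat.cast_pos.2 hi
  have hsum : ∑ j ∈ Icc 1 i, (j : ℝ) ^ (ζ - 1 / 2 + ε / 2) * ((j : ℝ) ^ (-(1 / 2 + ε / 2)) * ξ j ω)
      = ∑ j ∈ Icc 1 i, (j : ℝ) ^ (ζ - 1) * ξ j ω := by
    refine sum_congr rfl fun j hj => ?_
    rw [← mul_assoc, ← Real.rpow_add (Nat.cast_pos.2 (mem_Icc.1 hj).1)]
    ring_nf
  have hexp : (i : ℝ) ^ (-(ε / 2)) = (i : ℝ) ^ ((1 : ℝ) / 2 - ε) * (i : ℝ) ^ (ζ - 1 / 2 + ε / 2)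
      / (i : ℝ) ^ ζ := by
    rw [← Real.rpow_add hi', ← Real.rpow_sub hi']
    ring_nf
  rw [hsum, hexp, abs_div, abs_mul, abs_of_pos (Real.rpow_pos_of_pos hi' _),
    abs_of_pos (one_div_pos.2 (Real.rpow_pos_of_pos hi' _))]
  field_simp
end
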